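/- arXiv:1908.05800 — 2 statements merged into one kernel-verified Lean document; each statement's English description precedes it below -/
import Mathlib

section
/- (Lemma 4.1) Let k > 0 and p, y ∈ ℝ³. Let K : S² × S² → ℂ^{3×3} be a continuous matrix-valued kernel satisfying the reciprocity relation K(x̂,d) = K(−d,−x̂)ᵀ for all x̂, d ∈ S², and such that x̂ · (K(x̂,d)q) = 0 for all x̂, d ∈ S² and all q ∈ ℂ³ with d·q = 0. Let F_K be the integral operator (F_K g)(x̂) = ∫_{S²} K(x̂,d) g(d) dσ(d). Then ∫_{S²} | ∫_{S²} (K(x̂,d)((d×p)×d)) · ((x̂×p)×x̂) e^{ik x̂·y} dσ(x̂) |² dσ(d) = ∫_{S²} | p · (F_K φ_y)(x̂) |² dσ(x̂), where φ_y(d) = (d×p)×d e^{−ik d·y}. -/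
open MeasureTheory Metric Complex

noncomputable section

abbrev R3 : Type := EuclideanSpace ℝ (Fin 3)
abbrev C3 : Type := EuclideanSpace ℂ (Fin 3)
abbrev S2 : Type := Metric.sphere (0 : R3) 1

/-- The surface measure on the unit sphere `S²` (total mass `4π`). -/
def σS : Measure S2 := (volume : Measure R3).toSphere

/-- Componentwise complexification of a real vector. -/
def cm (x : R3) : C3 := WithLp.toLp 2 (fun i => (x i : ℂ))

/-- Real dot product on `ℝ³`. -/
def dotR (a b : R3) : ℝ := ∑ i, a i * b i

/-- Bilinear (unconjugated) dot product on `ℂ³`. -/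
def dotc (a b : C3) : ℂ := ∑ i, a i * b i

/-- Cross product on `ℂ³`, extended bilinearly. -/
def crossc (a b : C3) : C3 := WithLp.toLp 2 (crossProduct a b)

/-- Hermitian pairing `a · conj b`. -/
def hdot (a b : C3) : ℂ := ∑ i, a i * (starRingEnd ℂ) (b i)

/-- The test function `φ_y(d) = (d×p)×d e^{−ik d·y}`. -/
def phiy (k : ℝ) (p y : R3) (d : S2) : C3 :=
  Complex.exp (-(Complex.I * k * (dotR (d : R3) y))) •
    crossc (crossc (cm (d : R3)) (cm p)) (cm (d : R3))

/-- The Herglotz wave function `(Hg)(x) = ∫_{S²} g(d) e^{ik x·d} dσ(d)`. -/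
def herg (k : ℝ) (g : S2 → C3) (x : R3) : C3 :=
  ∫ d : S2, Complex.exp (Complex.I * k * (dotR x (d : R3))) • g d ∂σS

open Classical in
/-- The `L²` class of a function (`0` if the function is not square integrable). -/
def toL2 {α : Type} [MeasurableSpace α] (μ : Measure α) (f : α → C3) : Lp C3 2 μ :=
  if h : MemLp f 2 μ then h.toLp f else 0

/-- `(H^*f)(d) = d × (∫_Ω f(x) e^{−ik x·d} dx) × d`. -/
def hergSt (k : ℝ) (Ω : Set R3) (f : R3 → C3) (d : S2) : C3 :=
  crossc (crossc (cm (d : R3))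
    (∫ x in Ω, Complex.exp (-(Complex.I * k * (dotR x (d : R3)))) • f x)) (cm (d : R3))

/-- The operator `F` built from the factorization `F = H^* T H`:
`(Fg)(d) = d × (∫_Ω (T(Hg))(x) e^{−ik x·d} dx) × d`. -/
def Fop (k : ℝ) (Ω : Set R3)
    (T : Lp C3 2 (volume.restrict Ω) →L[ℂ] Lp C3 2 (volume.restrict Ω))
    (g : S2 → C3) (d : S2) : C3 :=
  crossc (crossc (cm (d : R3))
    (∫ x in Ω, Complex.exp (-(Complex.I * k * (dotR x (d : R3)))) •
      (T (toL2 (volume.restrict Ω) (herg k g))) x)) (cm (d : R3))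

/-- The OSM imaging functional `I_OSM(y) = ∫_{S²} |p·(Fφ_y)(x̂)|² dσ(x̂)`. -/
def IOSM (k : ℝ) (Ω : Set R3)
    (T : Lp C3 2 (volume.restrict Ω) →L[ℂ] Lp C3 2 (volume.restrict Ω))
    (p y : R3) : ℝ :=
  ∫ xh : S2, ‖dotc (cm p) (Fop k Ω T (phiy k p y) xh)‖ ^ 2 ∂σS

/-- The DSM imaging functional `I_DSM(y) = |⟨Fφ_y, φ_y⟩_{L²(S²)}|`. -/
def IDSM (k : ℝ) (Ω : Set R3)
    (T : Lp C3 2 (volume.restrict Ω) →L[ℂ] Lp C3 2 (volume.restrict Ω))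
    (p y : R3) : ℝ :=
  ‖∫ d : S2, hdot (Fop k Ω T (phiy k p y) d) (phiy k p y d) ∂σS‖

/-- The set `H(L²_t(S²)) ⊂ L²(Ω,ℂ³)`: images under the Herglotz operator of square
integrable tangential fields. -/
def ranHt (k : ℝ) (Ω : Set R3) : Set (Lp C3 2 (volume.restrict Ω)) :=
  {h | ∃ g : S2 → C3, MemLp g 2 σS ∧ (∀ᵐ (d : S2) ∂σS, dotc (cm d.val) (g d) = 0) ∧
    h = toL2 (volume.restrict Ω) (herg k g)}


/-- Antipodal map on the unit sphere. -/
def negS (d : S2) : S2 :=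
  ⟨-(d : R3), by
    rw [mem_sphere_zero_iff_norm, norm_neg, ← mem_sphere_zero_iff_norm]; exact d.2⟩

/-- A `3×3` complex matrix acting on `ℂ³`. -/
def mvec (M : Matrix (Fin 3) (Fin 3) ℂ) (v : C3) : C3 := WithLp.toLp 2 (M.mulVec v)

/-!
On the sphere, `p = (x̂×p)×x̂ + (x̂·p) x̂`, and `K(x̂,d) φ_y(d)` is orthogonal to `x̂` because
`φ_y(d)` is tangent at `d`; hence `p · (F_K φ_y)(x̂) = R(x̂)`, the integral over `d` of
`((x̂×p)×x̂) · K(x̂,d) φ_y(d)`. On the left, substituting `x̂ ↦ −x̂` (which fixes `(x̂×p)×x̂`) and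
applying reciprocity turns the inner integral at `d` into `R(−d)`. Both sides are therefore
`∫ |R|²`, up to the antipodal map, which preserves `σ`.
-/

lemma dotc_eq_sum_smul_proj (a w : C3) :
    dotc a w = (∑ i, a i • EuclideanSpace.proj i : C3 →L[ℂ] ℂ) w := by
  simp [dotc]

lemma dotc_integral {α : Type*} [MeasurableSpace α] {μ : Measure α} (a : C3) {f : α → C3}
    (hf : Integrable f μ) : dotc a (∫ x, f x ∂μ) = ∫ x, dotc a (f x) ∂μ := by
  simp_rw [dotc_eq_sum_smul_proj a]
  exact ((∑ i, a i • EuclideanSpace.proj i : C3 →L[ℂ] ℂ).integral_comp_comm hf).symm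

lemma dotc_smul_right (a : C3) (c : ℂ) (b : C3) : dotc a (c • b) = c * dotc a b := by
  simp only [dotc, PiLp.smul_apply, smul_eq_mul, Finset.mul_sum]
  exact Finset.sum_congr rfl fun _ _ => by ring

lemma mvec_smul (M : Matrix (Fin 3) (Fin 3) ℂ) (c : ℂ) (v : C3) :
    mvec M (c • v) = c • mvec M v := by
  simp [mvec, Matrix.mulVec_smul]

lemma dotc_mvec_transpose (M : Matrix (Fin 3) (Fin 3) ℂ) (a b : C3) :
    dotc (mvec M.transpose a) b = dotc a (mvec M b) := by
  simp only [dotc, mvec]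
  change Matrix.mulVec M.transpose a ⬝ᵥ b = a ⬝ᵥ M.mulVec b
  rw [Matrix.mulVec_transpose, Matrix.dotProduct_mulVec]

def tangentialPart (p x : R3) : C3 := crossc (crossc (cm x) (cm p)) (cm x)

lemma dotc_cm_tangentialPart (p x : R3) : dotc (cm x) (tangentialPart p x) = 0 :=
  dot_cross_self _ _

lemma cm_neg (x : R3) : cm (-x) = -cm x := by ext i; simp [cm]

lemma tangentialPart_neg (p x : R3) : tangentialPart p (-x) = tangentialPart p x := by
  simp only [tangentialPart, cm_neg, crossc, WithLp.ofLp_neg, map_neg, LinearMap.neg_apply,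
    neg_neg]

lemma dotc_cm_cm (x y : R3) : dotc (cm x) (cm y) = (dotR x y : ℂ) := by
  simp [dotc, dotR, cm]

lemma dotR_self_of_mem_sphere (x : S2) : dotR x x = 1 := by
  have h := EuclideanSpace.real_norm_sq_eq (x : R3)
  rw [norm_eq_of_mem_sphere, one_pow] at h
  simpa [dotR, ← sq] using h.symm

lemma tangentialPart_eq_sub (p : R3) (x : S2) :
    tangentialPart p x = cm p - (dotR x p : ℂ) • cm x := by
  have hxx : (cm x).ofLp ⬝ᵥ (cm x).ofLp = 1 := by
    change dotc (cm x) (cm x) = 1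
    rw [dotc_cm_cm, dotR_self_of_mem_sphere, Complex.ofReal_one]
  have hpx : (cm p).ofLp ⬝ᵥ (cm x).ofLp = dotR x p := by
    change dotc (cm p) (cm x) = _
    rw [dotc_cm_cm, dotR, dotR]; simp only [mul_comm]
  apply WithLp.ofLp_injective
  simpa [tangentialPart, crossc, hxx, hpx] using
    cross_cross_eq_smul_sub_smul (cm x).ofLp (cm p).ofLp (cm x).ofLp

lemma dotc_cm_eq_dotc_tangentialPart {p : R3} {x : S2} {w : C3} (hw : dotc (cm x) w = 0) :
    dotc (cm p) w = dotc (tangentialPart p x) w := by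
  change (cm x).ofLp ⬝ᵥ w.ofLp = 0 at hw
  change _ = (tangentialPart p x).ofLp ⬝ᵥ w.ofLp
  rw [tangentialPart_eq_sub, WithLp.ofLp_sub, WithLp.ofLp_smul, sub_dotProduct, smul_dotProduct,
    hw, smul_zero, sub_zero]
  rfl

open scoped Pointwise in
theorem MeasureTheory.Measure.measurePreserving_neg_toSphere {E : Type*} [NormedAddCommGroup E]
    [NormedSpace ℝ E] [MeasurableSpace E] [BorelSpace E] (μ : Measure E) [μ.IsNegInvariant] :
    MeasurePreserving (Neg.neg : sphere (0 : E) 1 → sphere (0 : E) 1)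
      μ.toSphere μ.toSphere := by
  refine ⟨continuous_neg.measurable, ?_⟩
  ext s hs
  have hval : ((↑) '' (Neg.neg ⁻¹' s) : Set E) = -((↑) '' s) := by
    change _ '' (-s) = _
    simp only [← Set.image_neg_eq_neg, Set.image_image, coe_neg_sphere]
  rw [Measure.map_apply continuous_neg.measurable hs, μ.toSphere_apply' hs,
    μ.toSphere_apply' (continuous_neg.measurable hs), hval, Set.smul_neg, Measure.measure_neg]

instance : IsFiniteMeasure σS := by unfold σS; infer_instance

lemma integral_comp_neg_sphere {F : Type*} [NormedAddCommGroup F] [NormedSpace ℝ F]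
    (f : S2 → F) : ∫ x, f (-x) ∂σS = ∫ x, f x ∂σS :=
  (Measure.measurePreserving_neg_toSphere _).integral_comp (Homeomorph.neg S2).measurableEmbedding f

lemma negS_eq_neg (d : S2) : negS d = -d := rfl

lemma dotR_neg_left (x y : R3) : dotR (-x) y = -dotR x y := by
  simp [dotR]

lemma continuous_cm : Continuous cm := by unfold cm; fun_prop

lemma continuous_crossc : Continuous fun q : C3 × C3 => crossc q.1 q.2 := by
  unfold crossc
  simp only [cross_apply]
  refine (PiLp.continuous_toLp _ _).comp (continuous_pi fun i => ?_)
  fin_cases i <;> simp <;> fun_prop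

lemma continuous_mvec : Continuous fun q : Matrix (Fin 3) (Fin 3) ℂ × C3 => mvec q.1 q.2 := by
  unfold mvec
  refine (PiLp.continuous_toLp _ _).comp (continuous_pi fun i => ?_)
  simp only [Matrix.mulVec, dotProduct, Fin.sum_univ_three]
  fun_prop

lemma continuous_tangentialPart (p : R3) : Continuous (tangentialPart p) := by
  have hcm_p : Continuous fun x : R3 => crossc (cm x) (cm p) :=
    continuous_crossc.comp (continuous_cm.prodMk continuous_const)
  show Continuous ((fun q : C3 × C3 => crossc q.1 q.2) ∘ fun x => (crossc (cm x) (cm p), cm x))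
  exact continuous_crossc.comp (hcm_p.prodMk continuous_cm)

lemma continuous_phiy (k : ℝ) (p y : R3) : Continuous (phiy k p y) := by
  have hdot : Continuous fun x : R3 => dotR x y := by unfold dotR; fun_prop
  exact (by fun_prop : Continuous fun d : S2 => Complex.exp (-(Complex.I * k * dotR d y))).smul
    ((continuous_tangentialPart p).comp continuous_subtype_val)

lemma phiy_eq_smul_tangentialPart (k : ℝ) (p y : R3) (d : S2) :
    phiy k p y d = Complex.exp (-(Complex.I * k * dotR d y)) • tangentialPart p d := rfl

lemma dotc_cm_phiy (k : ℝ) (p y : R3) (d : S2) : dotc (cm d) (phiy k p y d) = 0 := by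
  rw [phiy_eq_smul_tangentialPart, dotc_smul_right, dotc_cm_tangentialPart, mul_zero]

theorem stmt6_general (k : ℝ) (p y : R3)
    (K : S2 → S2 → Matrix (Fin 3) (Fin 3) ℂ)
    (hKcont : Continuous (fun q : S2 × S2 => K q.1 q.2))
    (hKrec : ∀ xh d : S2, K xh d = (K (negS d) (negS xh)).transpose)
    (hKtan : ∀ (xh d : S2) (q : C3),
      dotc (cm d.val) q = 0 → dotc (cm xh.val) (mvec (K xh d) q) = 0) :
    (∫ d : S2, ‖∫ xh : S2,
        dotc (mvec (K xh d) (crossc (crossc (cm d.val) (cm p)) (cm d.val)))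
          (crossc (crossc (cm xh.val) (cm p)) (cm xh.val)) *
          Complex.exp (Complex.I * k * dotR xh.val y) ∂σS‖ ^ 2 ∂σS) =
      ∫ xh : S2, ‖dotc (cm p) (∫ d : S2, mvec (K xh d) (phiy k p y d) ∂σS)‖ ^ 2 ∂σS := by
  set R : S2 → ℂ := fun x =>
    ∫ d, dotc (tangentialPart p x) (mvec (K x d) (phiy k p y d)) ∂σS
  have hright : ∀ x : S2, dotc (cm p) (∫ d, mvec (K x d) (phiy k p y d) ∂σS) = R x := by
    intro x
    have hcont : Continuous fun d => mvec (K x d) (phiy k p y d) :=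
      continuous_mvec.comp
        ((hKcont.comp (Continuous.prodMk_right x)).prodMk (continuous_phiy k p y))
    rw [dotc_integral _ (hcont.integrable_of_hasCompactSupport (.of_compactSpace _))]
    exact integral_congr_ae (ae_of_all _ fun d =>
      dotc_cm_eq_dotc_tangentialPart (hKtan x d _ (dotc_cm_phiy k p y d)))
  have hleft : ∀ d : S2,
      (∫ x : S2, dotc (mvec (K x d) (tangentialPart p d)) (tangentialPart p x) *
      Complex.exp (Complex.I * k * dotR x y) ∂σS) = R (-d) := by
    intro d
    rw [← integral_comp_neg_sphere]
    refine integral_congr_ae (ae_of_all _ fun x => ?_)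
    simp only [phiy_eq_smul_tangentialPart, mvec_smul, dotc_smul_right]
    rw [hKrec, negS_eq_neg, negS_eq_neg, neg_neg, dotc_mvec_transpose, coe_neg_sphere,
      coe_neg_sphere, tangentialPart_neg, tangentialPart_neg, dotR_neg_left, Complex.ofReal_neg,
      mul_neg, mul_comm]
  change ∫ d, ‖∫ x, dotc (mvec (K x d) (tangentialPart p d)) (tangentialPart p x) * _ ∂σS‖ ^ 2
    ∂σS = _
  simp only [hleft, hright]
  exact integral_comp_neg_sphere fun d => ‖R d‖ ^ 2

/-- **Lemma 4.1.** -/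
theorem stmt6 (k : ℝ) (hk : 0 < k) (p y : R3)
    (K : S2 → S2 → Matrix (Fin 3) (Fin 3) ℂ)
    (hKcont : Continuous (fun q : S2 × S2 => K q.1 q.2))
    (hKrec : ∀ xh d : S2, K xh d = (K (negS d) (negS xh)).transpose)
    (hKtan : ∀ (xh d : S2) (q : C3),
      dotc (cm d.val) q = 0 → dotc (cm xh.val) (mvec (K xh d) q) = 0) :
    (∫ d : S2, ‖∫ xh : S2,
        dotc (mvec (K xh d) (crossc (crossc (cm d.val) (cm p)) (cm d.val)))
          (crossc (crossc (cm xh.val) (cm p)) (cm xh.val)) *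
          Complex.exp (Complex.I * k * dotR xh.val y) ∂σS‖ ^ 2 ∂σS) =
      ∫ xh : S2, ‖dotc (cm p) (∫ d : S2, mvec (K xh d) (phiy k p y d) ∂σS)‖ ^ 2 ∂σS :=
  stmt6_general k p y K hKcont hKrec hKtan
end
end

section
/- (Theorem 3.2(d), sufficiency) Let k > 0, let Ω ⊂ ℝ³ be a nonempty bounded open set, let p ∈ ℝ³, and let y ∈ Ω. Then there exists f ∈ L²(Ω,ℂ³) such that (d×p)×d · e^{−ik d·y} = d × (∫_Ω f(x) e^{−ik x·d} dx) × d for every d ∈ S². -/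
open MeasureTheory Metric Complex

noncomputable section

/-! The field `f = C⁻¹ p 𝟙_{B(y,ε)}` works for a small ball `B(y,ε) ⊆ Ω`. Translating the ball to
the origin gives `∫_{B(y,ε)} e^{-ik x·d} dx = e^{-ik y·d} C(d)` with `C(d) = ∫_{B(0,ε)} e^{-ik z·d} dz`,
and `C(d)` does not depend on the unit vector `d` because a reflection maps `d` to any other unit
vector and preserves the ball and Lebesgue measure. If `|k| ε ≤ 1` the phase stays in `[-1, 1]`,
so `Re C ≥ cos 1 · |B(0,ε)| > 0`. -/

open scoped RealInnerProductSpace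

lemma dotR_eq_inner (a b : R3) : dotR a b = ⟪a, b⟫ := by
  simp [dotR, PiLp.inner_apply, mul_comm]

lemma crossc_smul_left (A : ℂ) (a b : C3) : crossc (A • a) b = A • crossc a b := by
  simp [crossc]

lemma crossc_smul_right (A : ℂ) (a b : C3) : crossc a (A • b) = A • crossc a b := by
  simp [crossc]

section BallIntegrals

variable {E F : Type*} [NormedAddCommGroup F] [NormedSpace ℝ F]

lemma setIntegral_closedBall_eq_setIntegral_closedBall_zero [NormedAddCommGroup E]
    [MeasurableSpace E] [BorelSpace E] (μ : Measure E) [μ.IsAddRightInvariant]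
    (f : E → F) (y : E) (r : ℝ) :
    ∫ x in closedBall y r, f x ∂μ = ∫ z in closedBall 0 r, f (z + y) ∂μ := by
  have hpre : (· + y) ⁻¹' closedBall y r = closedBall (0 : E) r := by
    ext z; simp [dist_eq_norm]
  rw [← hpre]
  exact ((measurePreserving_add_right μ y).setIntegral_preimage_emb
    (Homeomorph.addRight y).measurableEmbedding f _).symm

variable [NormedAddCommGroup E] [InnerProductSpace ℝ E] [FiniteDimensional ℝ E]
  [MeasurableSpace E] [BorelSpace E]

lemma setIntegral_closedBall_zero_comp_inner_eq (g : ℝ → F) {d d' : E} (h : ‖d‖ = ‖d'‖)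
    (r : ℝ) : ∫ z in closedBall 0 r, g ⟪z, d⟫ = ∫ z in closedBall 0 r, g ⟪z, d'⟫ := by
  set R := Submodule.reflection (ℝ ∙ (d - d'))ᗮ
  have hpre : R ⁻¹' closedBall (0 : E) r = closedBall 0 r := by
    ext z; simp
  have hinner : ∀ z, ⟪z, d⟫ = ⟪R z, d'⟫ := fun z => by
    rw [← Submodule.reflection_sub h, R.inner_map_map]
  simp only [hinner]
  conv_lhs => rw [← hpre]
  exact R.measurePreserving.setIntegral_preimage_emb
    R.toHomeomorph.measurableEmbedding (fun w => g ⟪w, d'⟫) _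

end BallIntegrals

lemma re_setIntegral_exp_mul_I_pos {X : Type*} [MeasurableSpace X] {μ : Measure X} {s : Set X}
    (hs : MeasurableSet s) (hμs₀ : μ s ≠ 0) (hμs : μ s ≠ ⊤) {φ : X → ℝ} (hφ : Measurable φ)
    (hφs : ∀ x ∈ s, |φ x| ≤ 1) : 0 < (∫ x in s, exp (φ x * I) ∂μ).re := by
  have hint : IntegrableOn (fun x => exp (φ x * I)) s μ :=
    Measure.integrableOn_of_bounded (M := 1) hμs (by fun_prop)
      (ae_of_all _ fun x => by simp [norm_exp_ofReal_mul_I])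
  have hcos : ∀ x ∈ s, Real.cos 1 ≤ Real.cos (φ x) := fun x hx => by
    rw [← Real.cos_abs (φ x)]
    exact Real.cos_le_cos_of_nonneg_of_le_pi (abs_nonneg _)
      (by linarith [Real.pi_gt_three]) (hφs x hx)
  have hcos_one : 0 < Real.cos 1 :=
    Real.cos_pos_of_mem_Ioo ⟨by linarith [Real.pi_gt_three], by linarith [Real.pi_gt_three]⟩
  have hμs_real : 0 < μ.real s := ENNReal.toReal_pos hμs₀ hμs
  calc 0 < Real.cos 1 * μ.real s := mul_pos hcos_one hμs_real
    _ ≤ ∫ x in s, Real.cos (φ x) ∂μ :=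
      setIntegral_ge_of_const_le_real hs hμs hcos (by simpa [IntegrableOn] using hint.re)
    _ = (∫ x in s, exp (φ x * I) ∂μ).re := by
      simpa [exp_ofReal_mul_I_re] using integral_re hint

section PlaneWaves

variable {E : Type*} [NormedAddCommGroup E] [InnerProductSpace ℝ E] [FiniteDimensional ℝ E]
  [MeasurableSpace E] [BorelSpace E]

lemma setIntegral_closedBall_exp_inner (k r : ℝ) (y : E) {d d₀ : E} (hd : ‖d‖ = ‖d₀‖) :
    ∫ x in closedBall y r, exp (-(I * k * ⟪x, d⟫)) =
      exp (-(I * k * ⟪y, d⟫)) * ∫ z in closedBall 0 r, exp (-(I * k * ⟪z, d₀⟫)) := by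
  rw [setIntegral_closedBall_eq_setIntegral_closedBall_zero,
    ← setIntegral_closedBall_zero_comp_inner_eq (fun t => exp (-(I * k * t))) hd,
    ← integral_const_mul]
  congr 1 with z
  rw [inner_add_left, ← exp_add]
  push_cast
  ring_nf

lemma setIntegral_closedBall_zero_exp_inner_ne_zero {k r : ℝ} (hr : 0 < r) (hkr : |k| * r ≤ 1)
    {d : E} (hd : ‖d‖ ≤ 1) : ∫ z in closedBall (0 : E) r, exp (-(I * k * ⟪z, d⟫)) ≠ 0 := by
  have hphase : ∀ z ∈ closedBall (0 : E) r, |-(k * ⟪z, d⟫)| ≤ 1 := fun z hz => by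
    have hz : ‖z‖ ≤ r := by simpa using hz
    calc |-(k * ⟪z, d⟫)| = |k| * |⟪z, d⟫| := by rw [abs_neg, abs_mul]
      _ ≤ |k| * (‖z‖ * ‖d‖) := by gcongr; exact abs_real_inner_le_norm z d
      _ ≤ |k| * (r * 1) := by gcongr
      _ ≤ 1 := by simpa using hkr
  have hre : 0 < (∫ z in closedBall (0 : E) r, exp (↑(-(k * ⟪z, d⟫)) * I)).re :=
    re_setIntegral_exp_mul_I_pos measurableSet_closedBall
      (measure_closedBall_pos volume 0 hr).ne' measure_closedBall_lt_top.ne (by fun_prop) hphase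
  have hintegrand : ∀ z : E, exp (↑(-(k * ⟪z, d⟫)) * I) = exp (-(I * k * ⟪z, d⟫)) := fun z => by
    push_cast; ring_nf
  simp only [hintegrand] at hre
  exact fun h => hre.ne' (by rw [h, zero_re])

end PlaneWaves

lemma setIntegral_smul_indicator_const {X 𝕜 V : Type*} [MeasurableSpace X] {μ : Measure X}
    [RCLike 𝕜] [NormedAddCommGroup V] [NormedSpace ℝ V] [NormedSpace 𝕜 V] [CompleteSpace V]
    {s t : Set X} (hs : MeasurableSet s) (hst : s ⊆ t) (c : X → 𝕜) (v : V) :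
    ∫ x in t, c x • s.indicator (fun _ => v) x ∂μ = (∫ x in s, c x ∂μ) • v := by
  simp_rw [← Set.indicator_smul_apply]
  rw [setIntegral_indicator hs, Set.inter_eq_right.mpr hst, integral_smul_const]

theorem stmt11_general (k : ℝ) (Ω : Set R3) (hΩopen : IsOpen Ω)
    (p y : R3) (hy : y ∈ Ω) :
    ∃ f : R3 → C3, MemLp f 2 (volume.restrict Ω) ∧
      ∀ d : S2, phiy k p y d = hergSt k Ω f d := by
  obtain ⟨ε₀, hε₀, hball⟩ := nhds_basis_closedBall.mem_iff.mp (hΩopen.mem_nhds hy)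
  set ε := min ε₀ (1 / (|k| + 1))
  have hε : 0 < ε := lt_min hε₀ (by positivity)
  have hkε : |k| * ε ≤ 1 := calc
    |k| * ε ≤ (|k| + 1) * (1 / (|k| + 1)) := by gcongr <;> simp [ε]
    _ = 1 := by field_simp
  have hsub : closedBall y ε ⊆ Ω := (closedBall_subset_closedBall (min_le_left _ _)).trans hball
  set e₀ : R3 := EuclideanSpace.single 0 1
  have he₀ : ‖e₀‖ = 1 := by simp [e₀]
  set C := ∫ z in closedBall (0 : R3) ε, exp (-(I * k * ⟪z, e₀⟫))
  have hC : C ≠ 0 := setIntegral_closedBall_zero_exp_inner_ne_zero hε hkε he₀.le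
  refine ⟨(closedBall y ε).indicator fun _ => C⁻¹ • cm p,
    memLp_indicator_const 2 measurableSet_closedBall _
      (Or.inr ((Measure.restrict_apply_le _ _).trans_lt measure_closedBall_lt_top).ne),
    fun d => ?_⟩
  have hd : ‖(d : R3)‖ = ‖e₀‖ := by simp [he₀]
  have hJ : ∫ x in Ω, exp (-(I * k * ⟪x, (d : R3)⟫)) • (closedBall y ε).indicator
      (fun _ => C⁻¹ • cm p) x = exp (-(I * k * ⟪(d : R3), y⟫)) • cm p := by
    rw [setIntegral_smul_indicator_const measurableSet_closedBall hsub,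
      setIntegral_closedBall_exp_inner k ε y hd, smul_smul, mul_assoc, mul_inv_cancel₀ hC,
      mul_one, real_inner_comm]
  simp only [phiy, hergSt, dotR_eq_inner, hJ, crossc_smul_left, crossc_smul_right]

/-- **Theorem 3.2(d), sufficiency.** -/
theorem stmt11 (k : ℝ) (hk : 0 < k) (Ω : Set R3) (hΩopen : IsOpen Ω)
    (hΩne : Ω.Nonempty) (hΩbdd : Bornology.IsBounded Ω) (p y : R3) (hy : y ∈ Ω) :
    ∃ f : R3 → C3, MemLp f 2 (volume.restrict Ω) ∧
      ∀ d : S2, phiy k p y d = hergSt k Ω f d :=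
  stmt11_general k Ω hΩopen p y hy
end
end
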